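/- Let $C_*$ be a Banach chain complex over $\mathbb{R}$ and $k \in \mathbb{N}$. Then $C_*$ satisfies the uniform boundary condition in degree $k$ if and only if the homology $H_k(C_*) = \ker \partial_k / \operatorname{im} \partial_{k+1}$, equipped with the quotient seminorm induced by the norm on $C_k$, is a normed space (i.e., the induced seminorm is a norm), in which case it is a Banach space. -/

import Mathlib

/-- The `k`-th homology `ker ∂_k / im ∂_{k+1}` of a chain complex (indexed so that
`d n : C n → C (n-1)` is `∂_n`), equipped with the quotient seminorm of the norm of `C k`. -/
abbrev homologyOf (C : ℕ → Type*) [∀ n, NormedAddCommGroup (C n)] [∀ n, NormedSpace ℝ (C n)]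
    (d : ∀ n, C n →L[ℝ] C (n - 1)) (k : ℕ) :=
  ↥(LinearMap.ker (d k)) ⧸
    Submodule.comap (LinearMap.ker (d k).toLinearMap).subtype (LinearMap.range (d (k + 1)).toLinearMap)

/-!
A bounded operator between Banach spaces has closed range iff it admits preimages of controlled
norm: one direction is the controlled-closure (successive approximation) argument, the other is
the open mapping theorem for the operator viewed as a surjection onto its range. The quotient
seminorm on `ker ∂ₖ ⧸ im ∂ₖ₊₁` is a norm iff `im ∂ₖ₊₁` is closed in `ker ∂ₖ`, which, since
`ker ∂ₖ` is closed and contains `im ∂ₖ₊₁`, means closed in `Cₖ`. Completeness holds in any case,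
as `H_k` is a quotient of the Banach space `ker ∂ₖ`.
-/

namespace ContinuousLinearMap

variable {𝕜 E F : Type*} [NontriviallyNormedField 𝕜] [NormedAddCommGroup E] [NormedSpace 𝕜 E]
  [NormedAddCommGroup F] [NormedSpace 𝕜 F] [CompleteSpace E] (f : E →L[𝕜] F)

theorem isClosed_range_of_exists_preimage_norm_le
    (h : ∃ K > 0, ∀ b ∈ Set.range f, ∃ c, f c = b ∧ ‖c‖ ≤ K * ‖b‖) :
    IsClosed (Set.range f) := by
  obtain ⟨K, hK, hf⟩ := h
  have hsurj : (f.toLinearMap.toAddMonoidHom.mkNormedAddGroupHom ‖f‖ f.le_opNorm).SurjectiveOnWith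
      f.toLinearMap.range.toAddSubgroup K := hf
  refine isClosed_of_closure_subset fun b hb => ?_
  obtain ⟨c, rfl, -⟩ := controlled_closure_of_complete hK one_pos hsurj b hb
  exact Set.mem_range_self c

theorem exists_preimage_norm_le_of_isClosed_range [CompleteSpace F]
    (hf : IsClosed (Set.range f)) :
    ∃ K > 0, ∀ b ∈ Set.range f, ∃ c, f c = b ∧ ‖c‖ ≤ K * ‖b‖ := by
  have : CompleteSpace f.range := hf.completeSpace_coe
  obtain ⟨K, hK, hpre⟩ := f.rangeRestrict.exists_preimage_norm_le <| by
    rw [coe_rangeRestrict]; exact Set.rangeFactorization_surjective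
  refine ⟨K, hK, fun b hb => ?_⟩
  obtain ⟨c, hc, hcn⟩ := hpre ⟨b, hb⟩
  exact ⟨c, congrArg Subtype.val hc, hcn⟩

theorem isClosed_range_iff_exists_preimage_norm_le [CompleteSpace F] :
    IsClosed (Set.range f) ↔ ∃ K > 0, ∀ b ∈ Set.range f, ∃ c, f c = b ∧ ‖c‖ ≤ K * ‖b‖ :=
  ⟨f.exists_preimage_norm_le_of_isClosed_range, f.isClosed_range_of_exists_preimage_norm_le⟩

end ContinuousLinearMap

theorem Submodule.Quotient.eq_zero_of_norm_eq_zero_iff_isClosed {𝕜 M : Type*} [NormedField 𝕜]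
    [SeminormedAddCommGroup M] [NormedSpace 𝕜 M] (S : Submodule 𝕜 M) :
    (∀ x : M ⧸ S, ‖x‖ = 0 → x = 0) ↔ IsClosed (S : Set M) := by
  refine ⟨fun h => isClosed_of_closure_subset fun m hm => ?_, fun hS x hx => ?_⟩
  · exact (Submodule.Quotient.mk_eq_zero S).1 <|
      h _ (QuotientAddGroup.norm_mk_eq_zero_iff_mem_closure.2 hm)
  · obtain ⟨m, rfl⟩ := Submodule.Quotient.mk_surjective S x
    exact (Submodule.Quotient.mk_eq_zero S).2 <|
      hS.closure_subset (QuotientAddGroup.norm_mk_eq_zero_iff_mem_closure.1 hx)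

theorem Submodule.isClosed_comap_subtype_iff {R M : Type*} [Semiring R] [AddCommMonoid M]
    [Module R M] [TopologicalSpace M] {V W : Submodule R M} (hV : IsClosed (V : Set M))
    (hWV : W ≤ V) : IsClosed (W.comap V.subtype : Set V) ↔ IsClosed (W : Set M) :=
  (hV.isClosedEmbedding_subtypeVal.isClosed_iff_preimage_isClosed (by simpa using hWV)).symm

theorem stmt3_general (C : ℕ → Type*) [∀ n, NormedAddCommGroup (C n)] [∀ n, NormedSpace ℝ (C n)]
    [∀ n, CompleteSpace (C n)]
    (d : ∀ n, C n →L[ℝ] C (n - 1))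
    (hdd : ∀ n x, d (n - 1) (d n x) = 0) (k : ℕ) :
    ((∃ K > 0, ∀ b ∈ Set.range (d (k + 1)), ∃ c, d (k + 1) c = b ∧ ‖c‖ ≤ K * ‖b‖) ↔
      ∀ x : homologyOf C d k, ‖x‖ = 0 → x = 0) ∧
    ((∃ K > 0, ∀ b ∈ Set.range (d (k + 1)), ∃ c, d (k + 1) c = b ∧ ‖c‖ ≤ K * ‖b‖) →
      CompleteSpace (homologyOf C d k)) := by
  have hbd : LinearMap.range (d (k + 1)).toLinearMap ≤ LinearMap.ker (d k).toLinearMap := by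
    rintro _ ⟨c, rfl⟩
    exact hdd (k + 1) c
  have : CompleteSpace (d k).ker := (d k).isClosed_ker.completeSpace_coe
  refine ⟨?_, fun _ => inferInstance⟩
  rw [Submodule.Quotient.eq_zero_of_norm_eq_zero_iff_isClosed,
    Submodule.isClosed_comap_subtype_iff (d k).isClosed_ker hbd,
    ← (d (k + 1)).isClosed_range_iff_exists_preimage_norm_le]
  rfl

/-- **Matsumoto–Morita: UBC and the induced seminorm on homology.**
Let `C_*` be a Banach chain complex over `ℝ` and `k ∈ ℕ`.  Then `C_*` satisfies the uniform
boundary condition in degree `k` if and only if the homology `H_k(C_*) = ker ∂_k / im ∂_{k+1}`,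
equipped with the quotient seminorm induced by the norm on `C_k`, is a normed space
(the induced seminorm is a norm); in that case it is moreover a Banach space (complete). -/
theorem stmt3 (C : ℕ → Type*) [∀ n, NormedAddCommGroup (C n)] [∀ n, NormedSpace ℝ (C n)]
    [∀ n, CompleteSpace (C n)]
    (d : ∀ n, C n →L[ℝ] C (n - 1))
    (h0 : ∀ x : C 0, d 0 x = 0)
    (hdd : ∀ n x, d (n - 1) (d n x) = 0) (k : ℕ) :
    ((∃ K > 0, ∀ b ∈ Set.range (d (k + 1)), ∃ c, d (k + 1) c = b ∧ ‖c‖ ≤ K * ‖b‖) ↔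
      ∀ x : homologyOf C d k, ‖x‖ = 0 → x = 0) ∧
    ((∃ K > 0, ∀ b ∈ Set.range (d (k + 1)), ∃ c, d (k + 1) c = b ∧ ‖c‖ ≤ K * ‖b‖) →
      CompleteSpace (homologyOf C d k)) :=
  stmt3_general C d hdd k
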